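/- Let A be a finite lattice whose join-irreducible elements can be listed p₁, …, p_n so that pᵢ D pⱼ implies i > j (no D-cycles, i.e., A satisfies (T∨)). Let B be a lattice with zero and let ξ : A∖{0} → B be an antitone map. Then the adjustment sequence of ξ stabilizes after at most n+1 steps: ξ⁽ⁿ⁾ = ξ⁽ⁿ⁺¹⁾. -/

import Mathlib

/-!
The maps `ξ⁽ᵏ⁾` are antitone and increase with `k`. By induction on `i`, `ξ⁽ᵏ⁺¹⁾(pᵢ) = ξ⁽ᵏ⁾(pᵢ)`
for `k ≥ i`: a cover `S` of `pᵢ` can be traded, without lowering `⋀ξ[S]`, for a cover made of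
`pᵢ` itself and of `p_j` with `j < i`, on which `ξ⁽ᵏ⁾` already agrees with `ξ⁽ᵏ⁻¹⁾`. For the trade,
pass to the down-closure `L` of `S` and delete maximal elements `m` of `L` of the wrong kind. If
`m` is join-reducible, its two lower parts stay in `L`. If `m = p_j` with `j > i`, then `pᵢ` does
not depend on `p_j`, so `pᵢ ≤ p_j ∨ ⋁(L∖{m})` gives `pᵢ ≤ p_j⁎ ∨ ⋁(L∖{m}) = ⋁(L∖{m})`.
Trading an arbitrary cover for one made of join-irreducibles in the same way gives `ξ⁽ⁿ⁺¹⁾ = ξ⁽ⁿ⁾`.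
-/

/-- The set of candidate values `⋀ξ[S]`, for `S` a nonempty finite subset of `A∖{0}` with
`x ≤ ⋁S`; the one-step adjustment `ξ⁽¹⁾(x)` is the join (least upper bound) of this set. -/
def adjSet {α β : Type*} [Lattice α] [OrderBot α] [Lattice β] [OrderBot β]
    (ξ : {a : α // a ≠ ⊥} → β) (x : {a : α // a ≠ ⊥}) : Set β :=
  {c | ∃ (S : Finset {a : α // a ≠ ⊥}) (hS : S.Nonempty),
      x.1 ≤ S.sup' hS (fun s => s.1) ∧ c = S.inf' hS ξ}

open Finset

section Cover

variable {α : Type*} [SemilatticeSup α] [OrderBot α] [DecidableEq α]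

/-- The dependency relation `y D q` (without `y ≠ q`), where `q'` stands for the lower
cover `q⁎`. -/
def Dep (y q q' : α) : Prop :=
  ∃ x, y ≤ q ⊔ x ∧ ¬ y ≤ q' ⊔ x

theorem sup_id_eq_sup_erase {L : Finset α} {m : α} (hm : m ∈ L) :
    L.sup id = m ⊔ (L.erase m).sup id :=
  (congrArg (·.sup id) (insert_erase hm)).symm.trans sup_insert

theorem sup_le_sup_erase_of_not_supIrred {L : Finset α} (hL : IsLowerSet (L : Set α)) {m : α}
    (hmL : m ∈ L) (hm : ¬ SupIrred m) : L.sup id ≤ (L.erase m).sup id := by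
  refine (sup_id_eq_sup_erase hmL).trans_le (sup_le ?_ le_rfl)
  rcases not_supIrred.1 hm with hmin | ⟨a, b, rfl, ha, hb⟩
  · exact hmin.eq_bot ▸ bot_le
  · exact sup_le (le_sup (f := id) (mem_erase.2 ⟨ha.ne, hL ha.le hmL⟩))
      (le_sup (f := id) (mem_erase.2 ⟨hb.ne, hL hb.le hmL⟩))

theorem le_sup_erase_of_not_dep {L : Finset α} (hL : IsLowerSet (L : Set α)) {y q q' : α}
    (hq' : q' < q) (hqL : q ∈ L) (hy : y ≤ L.sup id) (hD : ¬ Dep y q q') :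
    y ≤ (L.erase q).sup id := by
  have hyq : y ≤ q ⊔ (L.erase q).sup id := hy.trans_eq (sup_id_eq_sup_erase hqL)
  have hq'L : q' ∈ L.erase q := mem_erase.2 ⟨hq'.ne, hL hq'.le hqL⟩
  exact (not_not.1 (not_and.1 (not_exists.1 hD _) hyq)).trans (sup_le (le_sup (f := id) hq'L) le_rfl)

theorem exists_subset_le_sup_of_forall_erase (good : α → Prop) {y : α}
    (hstep : ∀ L : Finset α, IsLowerSet (L : Set α) → ∀ m ∈ L, ¬ good m →
      y ≤ L.sup id → y ≤ (L.erase m).sup id)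
    (L : Finset α) (hL : IsLowerSet (L : Set α)) (hy : y ≤ L.sup id) :
    ∃ T ⊆ L, (∀ t ∈ T, good t) ∧ y ≤ T.sup id := by
  classical
  induction L using Finset.strongInduction with
  | H L ih =>
    by_cases hbad : ∃ m, Maximal (· ∈ L) m ∧ ¬ good m
    · obtain ⟨m, hmax, hm⟩ := hbad
      have hL' : IsLowerSet ((L.erase m : Finset α) : Set α) := by
        rw [coe_erase]
        exact hL.erase fun b hb hmb => (hmax.2 hb hmb).antisymm hmb
      obtain ⟨T, hTL, hT, hyT⟩ := ih _ (erase_ssubset hmax.1) hL' (hstep L hL m hmax.1 hm hy)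
      exact ⟨T, hTL.trans (erase_subset _ _), hT, hyT⟩
    · simp only [not_exists, not_and, not_not] at hbad
      refine ⟨L.filter (Maximal (· ∈ L)), filter_subset _ _,
        fun t ht => hbad t (mem_filter.1 ht).2, hy.trans (Finset.sup_le fun a ha => ?_)⟩
      obtain ⟨b, hab, hb⟩ := L.exists_le_maximal ha
      exact hab.trans (le_sup (f := id) (mem_filter.2 ⟨hb.1, hb⟩))

theorem exists_cover_le_inf' [Fintype α] {β : Type*} [SemilatticeInf β]
    {g : {a : α // a ≠ ⊥} → β} (hg : Antitone g) (good : α → Prop)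
    (hgood : ∀ a, good a → a ≠ ⊥) (x : {a : α // a ≠ ⊥})
    (hstep : ∀ L : Finset α, IsLowerSet (L : Set α) → ∀ m ∈ L, ¬ good m →
      x.1 ≤ L.sup id → x.1 ≤ (L.erase m).sup id)
    {S : Finset {a : α // a ≠ ⊥}} (hS : S.Nonempty) (hxS : x.1 ≤ S.sup' hS Subtype.val) :
    ∃ (T : Finset {a : α // a ≠ ⊥}) (hT : T.Nonempty), (∀ t ∈ T, good t.1) ∧
      x.1 ≤ T.sup' hT Subtype.val ∧ S.inf' hS g ≤ T.inf' hT g := by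
  classical
  set L := univ.filter fun a : α => ∃ s ∈ S, a ≤ s.1 with hLdef
  have hmemL : ∀ a, a ∈ L ↔ ∃ s ∈ S, a ≤ s.1 := by simp [hLdef]
  have hL : IsLowerSet (L : Set α) := fun a b hba ha => by
    obtain ⟨s, hs, has⟩ := (hmemL a).1 ha
    exact (hmemL b).2 ⟨s, hs, hba.trans has⟩
  have hxL : x.1 ≤ L.sup id :=
    hxS.trans (sup'_le _ _ fun s hs => le_sup (f := id) ((hmemL _).2 ⟨s, hs, le_rfl⟩))
  obtain ⟨T₀, hT₀L, hgood₀, hxT₀⟩ := exists_subset_le_sup_of_forall_erase good hstep L hL hxL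
  set T := T₀.subtype (· ≠ ⊥)
  have hxT : x.1 ≤ T.sup Subtype.val := hxT₀.trans <| Finset.sup_le fun a ha =>
    le_sup (f := Subtype.val) (show (⟨a, hgood a (hgood₀ a ha)⟩ : {a : α // a ≠ ⊥}) ∈ T from
      mem_subtype.2 ha)
  have hT : T.Nonempty := by
    rcases T.eq_empty_or_nonempty with hT | hT
    · rw [hT, sup_empty] at hxT
      exact absurd (le_bot_iff.1 hxT) x.2
    · exact hT
  refine ⟨T, hT, fun t ht => hgood₀ _ (mem_subtype.1 ht), by rwa [sup'_eq_sup],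
    le_inf' _ _ fun t ht => ?_⟩
  obtain ⟨s, hs, hts⟩ := (hmemL _).1 (hT₀L (mem_subtype.1 ht))
  exact (inf'_le g hs).trans (hg hts)

end Cover

section Adjustment

variable {α β : Type*} [Lattice α] [OrderBot α] [Lattice β] [OrderBot β]
  {g h : {a : α // a ≠ ⊥} → β}

theorem adjSet_subset_of_le {x y : {a : α // a ≠ ⊥}} (hxy : x ≤ y) :
    adjSet g y ⊆ adjSet g x := by
  rintro c ⟨S, hS, hyS, rfl⟩
  exact ⟨S, hS, (show x.1 ≤ y.1 from hxy).trans hyS, rfl⟩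

theorem mem_adjSet_self (x : {a : α // a ≠ ⊥}) : g x ∈ adjSet g x :=
  ⟨{x}, singleton_nonempty x, by simp, by simp⟩

theorem antitone_of_isLUB_adjSet (hh : ∀ x, IsLUB (adjSet g x) (h x)) : Antitone h :=
  fun x y hxy => (hh y).mono (hh x) (adjSet_subset_of_le hxy)

theorem le_of_isLUB_adjSet {x : {a : α // a ≠ ⊥}} (hh : IsLUB (adjSet g x) (h x)) : g x ≤ h x :=
  hh.1 (mem_adjSet_self x)

theorem inf'_le_of_isLUB_adjSet {x : {a : α // a ≠ ⊥}} (hh : IsLUB (adjSet g x) (h x))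
    {T : Finset {a : α // a ≠ ⊥}} (hT : T.Nonempty) (hxT : x.1 ≤ T.sup' hT Subtype.val)
    (hhg : ∀ t ∈ T, h t ≤ g t) : T.inf' hT h ≤ h x :=
  (le_inf' _ _ fun t ht => (inf'_le h ht).trans (hhg t ht)).trans (hh.1 ⟨T, hT, hxT, rfl⟩)

theorem adjust_succ_apply_le_of_le [Fintype α] {n : ℕ} {p pstar : Fin n → α}
    (hirr : ∀ i, SupIrred (p i)) (hall : ∀ q : α, SupIrred q → ∃ i, q = p i)
    (hlt : ∀ i, pstar i < p i)
    (hT : ∀ i j : Fin n, p i ≠ p j → Dep (p i) (p j) (pstar j) → (j : ℕ) < (i : ℕ))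
    {ξ : ℕ → ({a : α // a ≠ ⊥} → β)} (hanti : ∀ k, Antitone (ξ k))
    (hadj : ∀ (k : ℕ) (x : {a : α // a ≠ ⊥}), IsLUB (adjSet (ξ k) x) (ξ (k + 1) x))
    (i : Fin n) (k : ℕ) (hik : (i : ℕ) ≤ k) :
    ξ (k + 1) ⟨p i, (hirr i).ne_bot⟩ ≤ ξ k ⟨p i, (hirr i).ne_bot⟩ := by
  classical
  induction i using WellFoundedLT.induction generalizing k with
  | _ i ih =>
    set P : {a : α // a ≠ ⊥} := ⟨p i, (hirr i).ne_bot⟩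
    refine (hadj k P).2 ?_
    rintro c ⟨S, hS, hPS, rfl⟩
    have hstep : ∀ L : Finset α, IsLowerSet (L : Set α) → ∀ q ∈ L,
        ¬ (q = p i ∨ ∃ j < i, q = p j) → p i ≤ L.sup id → p i ≤ (L.erase q).sup id := by
      intro L hL q hqL hbad hy
      by_cases hq : SupIrred q
      · obtain ⟨j, rfl⟩ := hall q hq
        refine le_sup_erase_of_not_dep hL (hlt j) hqL hy fun hD => ?_
        exact (not_or.1 hbad).2 ⟨j, hT i j (Ne.symm (not_or.1 hbad).1) hD, rfl⟩
      · exact hy.trans (sup_le_sup_erase_of_not_supIrred hL hqL hq)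
    obtain ⟨T, hTne, hgood, hPT, hST⟩ := exists_cover_le_inf' (hanti k) _
      (by rintro _ (rfl | ⟨j, -, rfl⟩) <;> exact (hirr _).ne_bot) P hstep hS hPS
    refine hST.trans ?_
    by_cases hPT' : ∃ t ∈ T, t.1 = p i
    · obtain ⟨t, ht, htP⟩ := hPT'
      obtain rfl : t = P := Subtype.ext htP
      exact inf'_le _ ht
    · have hlow : ∀ t ∈ T, ∃ j < i, t.1 = p j := fun t ht =>
        (hgood t ht).resolve_left fun htP => hPT' ⟨t, ht, htP⟩
      obtain ⟨t₀, ht₀⟩ := hTne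
      obtain ⟨j₀, hj₀, -⟩ := hlow t₀ ht₀
      obtain ⟨m, rfl⟩ : ∃ m, k = m + 1 := ⟨k - 1, by have := Fin.lt_def.1 hj₀; omega⟩
      refine inf'_le_of_isLUB_adjSet (hadj m P) ⟨t₀, ht₀⟩ hPT fun t ht => ?_
      obtain ⟨j, hji, hj⟩ := hlow t ht
      obtain rfl : t = ⟨p j, (hirr j).ne_bot⟩ := Subtype.ext hj
      exact ih j hji m (by have := Fin.lt_def.1 hji; omega)

end Adjustment

theorem stmt17_general {α β : Type*} [Lattice α] [Fintype α] [OrderBot α] [Lattice β] [OrderBot β]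
    (n : ℕ) (p : Fin n → α)
    (hirr : ∀ i, SupIrred (p i)) (hall : ∀ q : α, SupIrred q → ∃ i, q = p i)
    (pstar : Fin n → α) (hcov : ∀ i, pstar i ⋖ p i)
    (hT : ∀ i j : Fin n, p i ≠ p j →
      (∃ x : α, p i ≤ p j ⊔ x ∧ ¬ p i ≤ pstar j ⊔ x) → (j : ℕ) < (i : ℕ))
    (ξ : ℕ → ({a : α // a ≠ ⊥} → β)) (hanti : Antitone (ξ 0))
    (hadj : ∀ (k : ℕ) (x : {a : α // a ≠ ⊥}), IsLUB (adjSet (ξ k) x) (ξ (k + 1) x)) :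
    ξ n = ξ (n + 1) := by
  classical
  have hantiK : ∀ k, Antitone (ξ k) := by
    rintro (_ | k)
    exacts [hanti, antitone_of_isLUB_adjSet (hadj k)]
  have hfreeze := adjust_succ_apply_le_of_le hirr hall (fun i => (hcov i).lt) hT hantiK hadj
  funext x
  refine le_antisymm (le_of_isLUB_adjSet (hadj n x)) ((hadj n x).2 ?_)
  rintro c ⟨S, hS, hxS, rfl⟩
  obtain ⟨T, hTne, hirrT, hxT, hST⟩ := exists_cover_le_inf' (hantiK n) SupIrred
    (fun _ h => h.ne_bot) x (fun L hL q hqL hq hy =>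
      hy.trans (sup_le_sup_erase_of_not_supIrred hL hqL hq)) hS hxS
  obtain ⟨t₀, ht₀⟩ := hTne
  obtain ⟨j₀, -⟩ := hall _ (hirrT t₀ ht₀)
  obtain ⟨m, rfl⟩ : ∃ m, n = m + 1 := ⟨n - 1, by have := j₀.pos; omega⟩
  refine hST.trans (inf'_le_of_isLUB_adjSet (hadj m x) ⟨t₀, ht₀⟩ hxT fun t ht => ?_)
  obtain ⟨j, hj⟩ := hall _ (hirrT t ht)
  obtain rfl : t = ⟨p j, (hirr j).ne_bot⟩ := Subtype.ext hj
  exact hfreeze j m (by have := j.isLt; omega)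

/-- If a finite lattice `A` satisfies `(T∨)` — its join-irreducibles can be listed
`p 0, …, p (n-1)` so that `p i D p j` implies `i > j` — then for every lattice `B` with
zero and every antitone map `ξ : A∖{0} → B`, the adjustment sequence of `ξ` stabilizes:
`ξ⁽ⁿ⁾ = ξ⁽ⁿ⁺¹⁾`. -/
theorem stmt17 {α β : Type*} [Lattice α] [Fintype α] [OrderBot α] [Lattice β] [OrderBot β]
    (n : ℕ) (p : Fin n → α) (hinj : Function.Injective p)
    (hirr : ∀ i, SupIrred (p i)) (hall : ∀ q : α, SupIrred q → ∃ i, q = p i)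
    (pstar : Fin n → α) (hcov : ∀ i, pstar i ⋖ p i)
    (hstar : ∀ i, ∀ x : α, x < p i → x ≤ pstar i)
    (hT : ∀ i j : Fin n, p i ≠ p j →
      (∃ x : α, p i ≤ p j ⊔ x ∧ ¬ p i ≤ pstar j ⊔ x) → (j : ℕ) < (i : ℕ))
    (ξ : ℕ → ({a : α // a ≠ ⊥} → β)) (hanti : Antitone (ξ 0))
    (hadj : ∀ (k : ℕ) (x : {a : α // a ≠ ⊥}), IsLUB (adjSet (ξ k) x) (ξ (k + 1) x)) :
    ξ n = ξ (n + 1) :=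
  stmt17_general n p hirr hall pstar hcov hT ξ hanti hadj
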